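/- arXiv:1111.1788 — 2 statements merged into one kernel-verified Lean document; each statement's English description precedes it below -/
import Mathlib

section
/- Let r ∈ ℝ^p and λ > 0. The minimum value of o ↦ ‖r - o‖₂² + λ‖o‖₂ over o ∈ ℝ^p equals ρ(r), where ρ(r) = ‖r‖₂² if ‖r‖₂ ≤ λ/2, and ρ(r) = λ‖r‖₂ - λ²/4 if ‖r‖₂ > λ/2. -/
/-- Minimizing out the outlier variable in the ℓ₂-regularized LS fit yields
Huber's vector loss: the minimum value of `o ↦ ‖r - o‖² + λ‖o‖` equals
`‖r‖²` if `‖r‖ ≤ λ/2` and `λ‖r‖ - λ²/4` otherwise. -/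
theorem stmt_1 (p : ℕ) (r : EuclideanSpace ℝ (Fin p)) (lam : ℝ) (hlam : 0 < lam)
    (rho : EuclideanSpace ℝ (Fin p) → ℝ)
    (hrho : ∀ x, rho x = if ‖x‖ ≤ lam / 2 then ‖x‖ ^ 2 else lam * ‖x‖ - lam ^ 2 / 4) :
    IsLeast {v : ℝ | ∃ o : EuclideanSpace ℝ (Fin p), v = ‖r - o‖ ^ 2 + lam * ‖o‖} (rho r) := by
  have hr := hrho r
  constructor
  · by_cases h : ‖r‖ ≤ lam / 2
    · exact ⟨0, by simp [hr, h]⟩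
    · push_neg at h
      have hs : 0 < ‖r‖ := lt_trans (by linarith) h
      refine ⟨(1 - lam / (2 * ‖r‖)) • r, ?_⟩
      have hc : 0 < 1 - lam / (2 * ‖r‖) := by
        rw [sub_pos, div_lt_one (by linarith)]; linarith
      have h1 : r - (1 - lam / (2 * ‖r‖)) • r = (lam / (2 * ‖r‖)) • r := by
        rw [sub_smul, one_smul]; module
      rw [hr, if_neg (not_le.mpr h), h1, norm_smul, norm_smul,
        Real.norm_eq_abs, Real.norm_eq_abs, abs_of_pos hc,
        abs_of_pos (by positivity)]
      field_simp
      ring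
  · rintro v ⟨o, rfl⟩
    have h1 : |‖r‖ - ‖o‖| ≤ ‖r - o‖ := abs_norm_sub_norm_le r o
    have h2 : (‖r‖ - ‖o‖) ^ 2 ≤ ‖r - o‖ ^ 2 := by
      rw [← sq_abs]; exact pow_le_pow_left₀ (abs_nonneg _) h1 2
    have ho : (0 : ℝ) ≤ ‖o‖ := norm_nonneg o
    rw [hr]
    split_ifs with h
    · nlinarith
    · nlinarith [sq_nonneg (‖r‖ - ‖o‖ - lam / 2)]
end

section
/- Let X_o ∈ ℝ^{N×p}, S ∈ ℝ^{N×q}, and let X_oᵀ S = L D Rᵀ be a singular value decomposition (L ∈ ℝ^{p×q} and R ∈ ℝ^{q×q} with orthonormal columns, D diagonal nonnegative). Then U* = L Rᵀ minimizes ‖X_o - S Uᵀ‖_F² over all U ∈ ℝ^{p×q} with Uᵀ U = I_q. -/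
open Matrix Finset

lemma sum_sq_eq_trace {m n : ℕ} (A : Matrix (Fin m) (Fin n) ℝ) :
    ∑ i, ∑ j, A i j ^ 2 = Matrix.trace (A.transpose * A) := by
  simp [Matrix.trace, Matrix.mul_apply, Matrix.diag, sq]
  rw [Finset.sum_comm]

lemma trace_bound {p q : ℕ}
    (L : Matrix (Fin p) (Fin q) ℝ) (R : Matrix (Fin q) (Fin q) ℝ)
    (d : Fin q → ℝ) (hd : ∀ i, 0 ≤ d i)
    (hL : L.transpose * L = 1) (hR : R.transpose * R = 1)
    (U : Matrix (Fin p) (Fin q) ℝ) (hU : U.transpose * U = 1) :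
    Matrix.trace (U.transpose * (L * Matrix.diagonal d * R.transpose)) ≤ ∑ i, d i := by
  have h1 : Matrix.trace (U.transpose * (L * Matrix.diagonal d * R.transpose))
      = Matrix.trace (R.transpose * U.transpose * L * Matrix.diagonal d) := by
    rw [Matrix.trace_mul_comm, Matrix.mul_assoc, Matrix.trace_mul_comm, ← Matrix.mul_assoc]
  rw [h1]
  have htr : Matrix.trace (R.transpose * U.transpose * L * Matrix.diagonal d)
      = ∑ i, (R.transpose * U.transpose * L) i i * d i := by
    simp [Matrix.trace, Matrix.diag, Matrix.mul_apply, Matrix.diagonal]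
  rw [htr]
  apply Finset.sum_le_sum
  intro i _
  have hUR : ∑ k, ((U * R) k i) ^ 2 = 1 := by
    have : ((U * R).transpose * (U * R)) i i = (1 : Matrix (Fin q) (Fin q) ℝ) i i := by
      rw [Matrix.transpose_mul, Matrix.mul_assoc, ← Matrix.mul_assoc U.transpose, hU,
        Matrix.one_mul, hR]
    simpa [Matrix.mul_apply, sq, mul_comm] using this
  have hLc : ∑ k, (L k i) ^ 2 = 1 := by
    have : (L.transpose * L) i i = (1 : Matrix (Fin q) (Fin q) ℝ) i i := by rw [hL]
    simpa [Matrix.mul_apply, sq] using this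
  have hentry : (R.transpose * U.transpose * L) i i ≤ 1 := by
    have heq : (R.transpose * U.transpose * L) i i = ∑ k, (U * R) k i * L k i := by
      rw [← Matrix.transpose_mul]
      simp [Matrix.mul_apply, mul_comm]
    rw [heq]
    calc ∑ k, (U * R) k i * L k i ≤ ∑ k, (((U * R) k i) ^ 2 + (L k i) ^ 2) / 2 := by
          apply Finset.sum_le_sum; intro k _
          nlinarith [sq_nonneg ((U * R) k i - L k i)]
      _ = 1 := by rw [← Finset.sum_div, Finset.sum_add_distrib, hUR, hLc]; norm_num
  nlinarith [hd i, hentry]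

/-- Reduced-rank Procrustes rotation: if `X_oᵀ S = L D Rᵀ` is an SVD (with
`L`, `R` having orthonormal columns and `D` diagonal nonnegative), then
`U* = L Rᵀ` minimizes `‖X_o - S Uᵀ‖_F²` over all `U` with `Uᵀ U = I_q`. -/
theorem stmt_12 (N p q : ℕ)
    (Xo : Matrix (Fin N) (Fin p) ℝ) (S : Matrix (Fin N) (Fin q) ℝ)
    (L : Matrix (Fin p) (Fin q) ℝ) (R : Matrix (Fin q) (Fin q) ℝ)
    (d : Fin q → ℝ) (hd : ∀ i, 0 ≤ d i)
    (hL : L.transpose * L = 1) (hR : R.transpose * R = 1)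
    (hSVD : Xo.transpose * S = L * Matrix.diagonal d * R.transpose) :
    ∀ U : Matrix (Fin p) (Fin q) ℝ, U.transpose * U = 1 →
      ∑ i, ∑ j, (Xo - S * (L * R.transpose).transpose) i j ^ 2 ≤
        ∑ i, ∑ j, (Xo - S * U.transpose) i j ^ 2 := by
  intro U hU
  -- expansion lemma
  have expand : ∀ V : Matrix (Fin p) (Fin q) ℝ, V.transpose * V = 1 →
      ∑ i, ∑ j, (Xo - S * V.transpose) i j ^ 2 =
        Matrix.trace (Xo.transpose * Xo) + Matrix.trace (S.transpose * S)
          - 2 * Matrix.trace (V.transpose * (Xo.transpose * S)) := by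
    intro V hV
    rw [sum_sq_eq_trace]
    have : (Xo - S * V.transpose).transpose * (Xo - S * V.transpose)
        = Xo.transpose * Xo - Xo.transpose * (S * V.transpose)
          - V * S.transpose * Xo + V * (S.transpose * S) * V.transpose := by
      simp only [Matrix.transpose_sub, Matrix.transpose_mul, Matrix.transpose_transpose,
        Matrix.sub_mul, Matrix.mul_sub, Matrix.mul_assoc]
      abel
    rw [this]
    simp only [Matrix.trace_sub, Matrix.trace_add]
    have h2 : Matrix.trace (V * (S.transpose * S) * V.transpose)
        = Matrix.trace (S.transpose * S) := by
      rw [Matrix.trace_mul_comm, ← Matrix.mul_assoc, hV, Matrix.one_mul]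
    have h3 : Matrix.trace (Xo.transpose * (S * V.transpose))
        = Matrix.trace (V.transpose * (Xo.transpose * S)) := by
      rw [← Matrix.mul_assoc, Matrix.trace_mul_comm]
    have h4 : Matrix.trace (V * S.transpose * Xo)
        = Matrix.trace (V.transpose * (Xo.transpose * S)) := by
      rw [← Matrix.trace_transpose (V * S.transpose * Xo)]
      simp only [Matrix.transpose_mul, Matrix.transpose_transpose, ← Matrix.mul_assoc]
      rw [Matrix.trace_mul_comm, Matrix.mul_assoc]
    rw [h2, h3, h4]; ring
  have hUstar : (L * R.transpose).transpose * (L * R.transpose) = 1 := by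
    have hRR : R * R.transpose = 1 := mul_eq_one_comm.mp hR
    rw [Matrix.transpose_mul, Matrix.transpose_transpose, Matrix.mul_assoc,
      ← Matrix.mul_assoc L.transpose, hL, Matrix.one_mul, hRR]
  rw [expand U hU, expand (L * R.transpose) hUstar, hSVD]
  have hstar : Matrix.trace ((L * R.transpose).transpose * (L * Matrix.diagonal d * R.transpose))
      = ∑ i, d i := by
    rw [Matrix.transpose_mul, Matrix.transpose_transpose]
    have : R * L.transpose * (L * Matrix.diagonal d * R.transpose)
        = R * Matrix.diagonal d * R.transpose := by
      rw [Matrix.mul_assoc R, ← Matrix.mul_assoc L.transpose, ← Matrix.mul_assoc L.transpose, hL,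
        Matrix.one_mul, ← Matrix.mul_assoc]
    rw [this, Matrix.trace_mul_comm, ← Matrix.mul_assoc, hR, Matrix.one_mul,
      Matrix.trace_diagonal]
  rw [hstar]
  have := trace_bound L R d hd hL hR U hU
  linarith
end
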